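/- arXiv:2604.21248 — 2 statements merged into one kernel-verified Lean document; each statement's English description precedes it below -/
import Mathlib

section
/- Let a, b ∈ ℝ² be unit vectors with a ≠ b, and for a nonzero vector v define P(v) = (1/‖v‖)(I₂ - v vᵀ/‖v‖²). Then the sum P(a) + P(b) is a singular matrix if and only if a = -b. -/
open Matrix

/-- The projection-type matrix `P(v) = (1/‖v‖)(I₂ - v vᵀ/‖v‖²)`. -/
noncomputable def projMat (v : EuclideanSpace ℝ (Fin 2)) : Matrix (Fin 2) (Fin 2) ℝ :=
  ‖v‖⁻¹ • ((1 : Matrix (Fin 2) (Fin 2) ℝ) - (‖v‖ ^ 2)⁻¹ • Matrix.of (fun i j => v i * v j))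

set_option maxHeartbeats 2000000 in
theorem stmt_7 (a b : EuclideanSpace ℝ (Fin 2)) (ha : ‖a‖ = 1) (hb : ‖b‖ = 1)
    (hab : a ≠ b) :
    (projMat a + projMat b).det = 0 ↔ a = -b := by
  have ha2 : a 0 ^ 2 + a 1 ^ 2 = 1 := by
    have h : ‖a‖ ^ 2 = 1 := by rw [ha]; norm_num
    rw [EuclideanSpace.norm_eq, Real.sq_sqrt (by positivity)] at h
    simpa [Fin.sum_univ_two, sq_abs] using h
  have hb2 : b 0 ^ 2 + b 1 ^ 2 = 1 := by
    have h : ‖b‖ ^ 2 = 1 := by rw [hb]; norm_num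
    rw [EuclideanSpace.norm_eq, Real.sq_sqrt (by positivity)] at h
    simpa [Fin.sum_univ_two, sq_abs] using h
  have hdet : (projMat a + projMat b).det = (a 0 * b 1 - a 1 * b 0) ^ 2 := by
    simp only [projMat, ha, hb]
    simp [Matrix.det_fin_two, Matrix.add_apply, Matrix.sub_apply, Matrix.smul_apply,
      Matrix.one_apply, Matrix.of_apply]
    nlinarith [ha2, hb2, sq_nonneg (a 0 * b 1 - a 1 * b 0)]
  rw [hdet]
  constructor
  · intro h
    have hcross : a 0 * b 1 - a 1 * b 0 = 0 := by
      have := sq_eq_zero_iff.mp h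
      linarith
    have hd : (a 0 * b 0 + a 1 * b 1) ^ 2 = 1 := by nlinarith
    have hne : ¬ (a 0 = b 0 ∧ a 1 = b 1) := by
      intro ⟨h0, h1⟩
      apply hab
      ext i
      fin_cases i <;> simpa
    have hd' : ((a 0 * b 0 + a 1 * b 1) - 1) * ((a 0 * b 0 + a 1 * b 1) + 1) = 0 := by
      nlinarith
    rcases mul_eq_zero.mp hd' with h1 | h1
    · exfalso
      apply hne
      constructor <;> nlinarith [sq_nonneg (a 0 - b 0), sq_nonneg (a 1 - b 1)]
    · have hsum : (a 0 + b 0) ^ 2 + (a 1 + b 1) ^ 2 = 0 := by nlinarith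
      have q0 : (a 0 + b 0) ^ 2 = 0 := by
        nlinarith [sq_nonneg (a 0 + b 0), sq_nonneg (a 1 + b 1)]
      have q1 : (a 1 + b 1) ^ 2 = 0 := by
        nlinarith [sq_nonneg (a 0 + b 0), sq_nonneg (a 1 + b 1)]
      have e0 : a 0 + b 0 = 0 := by
        have := sq_eq_zero_iff.mp q0; linarith
      have e1 : a 1 + b 1 = 0 := by
        have := sq_eq_zero_iff.mp q1; linarith
      ext i
      fin_cases i
      · show a 0 = -(b 0)
        linarith
      · show a 1 = -(b 1)
        linarith
  · intro h
    have h0 : a 0 = -b 0 := by rw [h]; simp [PiLp.neg_apply]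
    have h1 : a 1 = -b 1 := by rw [h]; simp [PiLp.neg_apply]
    rw [h0, h1]; ring
end

section
/- Let s ∈ ℝ² and p, q ∈ ℝ² with s ≠ p and s ≠ q, and suppose the unit vectors (s - p)/‖s - p‖ and (s - q)/‖s - q‖ make an angle of 2π/3 (i.e., their inner product equals -1/2). Then the matrix B = (1/‖p - s‖)(I₂ - (s-p)(s-p)ᵀ/‖p-s‖²) + (1/‖q - s‖)(I₂ - (s-q)(s-q)ᵀ/‖q-s‖²) is positive definite. -/
open Matrix

lemma projMat_herm (v : EuclideanSpace ℝ (Fin 2)) : (projMat v).IsHermitian := by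
  ext i j
  simp [projMat, Matrix.conjTranspose_apply, Matrix.one_apply, mul_comm]
  fin_cases i <;> fin_cases j <;> simp

lemma quad_eq (v : EuclideanSpace ℝ (Fin 2)) (hv : v ≠ 0) (x : Fin 2 → ℝ) :
    dotProduct x (projMat v *ᵥ x) =
      ‖v‖⁻¹ ^ 3 * (v 0 * x 1 - v 1 * x 0) ^ 2 := by
  have ha : (0:ℝ) < ‖v‖ := norm_pos_iff.mpr hv
  have ha' : ‖v‖ ≠ 0 := ne_of_gt ha
  have ha2 : ‖v‖ ^ 2 = v 0 ^ 2 + v 1 ^ 2 := by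
    rw [EuclideanSpace.norm_eq, Real.sq_sqrt (by positivity), Fin.sum_univ_two,
      Real.norm_eq_abs, Real.norm_eq_abs, sq_abs, sq_abs]
  have hS : v 0 ^ 2 + v 1 ^ 2 ≠ 0 := by rw [← ha2]; positivity
  have hpow : ‖v‖⁻¹ ^ 3 = ‖v‖⁻¹ * (v 0 ^ 2 + v 1 ^ 2)⁻¹ := by
    rw [← ha2]; field_simp
  simp only [projMat, Matrix.mulVec, dotProduct, Fin.sum_univ_two,
    Matrix.smul_apply, Matrix.sub_apply, Matrix.one_apply, Matrix.of_apply]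
  rw [ha2, hpow]
  simp only [show ((0:Fin 2) = 1) ↔ False by decide, show ((1:Fin 2) = 0) ↔ False by decide,
    if_true, if_false, eq_self_iff_true]
  field_simp
  have h1 : ‖v‖ * ‖v‖⁻¹ = 1 := mul_inv_cancel₀ ha'
  have h2 : (v 0 ^ 2 + v 1 ^ 2) * (v 0 ^ 2 + v 1 ^ 2)⁻¹ = 1 := mul_inv_cancel₀ hS
  linear_combination ((v 0 ^ 2 + v 1 ^ 2) * (x 0 ^ 2 + x 1 ^ 2) - (v 0 * x 0 + v 1 * x 1) ^ 2) * h1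
    - ‖v‖ * ‖v‖⁻¹ * (v 0 * x 0 + v 1 * x 1) ^ 2 * h2

theorem stmt_8 (s p q : EuclideanSpace ℝ (Fin 2)) (hp : s ≠ p) (hq : s ≠ q)
    (hangle : (inner ℝ (‖s - p‖⁻¹ • (s - p)) (‖s - q‖⁻¹ • (s - q)) : ℝ) = -1/2) :
    (projMat (s - p) + projMat (s - q)).PosDef := by
  set u := s - p with hu_def
  set w := s - q with hw_def
  have hu : u ≠ 0 := sub_ne_zero.mpr hp
  have hw : w ≠ 0 := sub_ne_zero.mpr hq
  have hau : (0:ℝ) < ‖u‖ := norm_pos_iff.mpr hu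
  have haw : (0:ℝ) < ‖w‖ := norm_pos_iff.mpr hw
  have hau2 : ‖u‖ ^ 2 = u 0 ^ 2 + u 1 ^ 2 := by
    rw [EuclideanSpace.norm_eq, Real.sq_sqrt (by positivity), Fin.sum_univ_two,
      Real.norm_eq_abs, Real.norm_eq_abs, sq_abs, sq_abs]
  have haw2 : ‖w‖ ^ 2 = w 0 ^ 2 + w 1 ^ 2 := by
    rw [EuclideanSpace.norm_eq, Real.sq_sqrt (by positivity), Fin.sum_univ_two,
      Real.norm_eq_abs, Real.norm_eq_abs, sq_abs, sq_abs]
  have hdot : u 0 * w 0 + u 1 * w 1 = -(‖u‖ * ‖w‖) / 2 := by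
    have h := hangle
    simp only [real_inner_smul_left, real_inner_smul_right, PiLp.inner_apply,
      RCLike.inner_apply, starRingEnd_apply, star_trivial, Fin.sum_univ_two] at h
    simp only [PiLp.smul_apply, smul_eq_mul] at h
    field_simp at h
    linarith
  refine Matrix.posDef_iff_dotProduct_mulVec.mpr ⟨?_, ?_⟩
  · exact (projMat_herm u).add (projMat_herm w)
  · intro x hx
    rw [star_trivial, Matrix.add_mulVec, dotProduct_add, quad_eq u hu x,
      quad_eq w hw x]
    have hc : u 0 * x 1 - u 1 * x 0 ≠ 0 ∨ w 0 * x 1 - w 1 * x 0 ≠ 0 := by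
      by_contra hcon
      push_neg at hcon
      obtain ⟨hc1, hc2⟩ := hcon
      have hx01 : x 0 ≠ 0 ∨ x 1 ≠ 0 := by
        by_contra hxx
        push_neg at hxx
        exact hx (funext fun i => by fin_cases i <;> simp [hxx.1, hxx.2])
      have hcross : u 0 * w 1 - u 1 * w 0 = 0 := by
        have e0 : (u 0 * w 1 - u 1 * w 0) * x 0 = 0 := by linear_combination w 0 * hc1 - u 0 * hc2
        have e1 : (u 0 * w 1 - u 1 * w 0) * x 1 = 0 := by linear_combination w 1 * hc1 - u 1 * hc2
        rcases hx01 with h | h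
        · exact (mul_eq_zero.mp e0).resolve_right h
        · exact (mul_eq_zero.mp e1).resolve_right h
      nlinarith [mul_pos hau haw, hdot, hcross, hau2, haw2, sq_nonneg (‖u‖ * ‖w‖)]
    rcases hc with h | h
    · have h1 : 0 < ‖u‖⁻¹ ^ 3 * (u 0 * x 1 - u 1 * x 0) ^ 2 := by positivity
      have h2 : 0 ≤ ‖w‖⁻¹ ^ 3 * (w 0 * x 1 - w 1 * x 0) ^ 2 := by positivity
      linarith
    · have h1 : 0 ≤ ‖u‖⁻¹ ^ 3 * (u 0 * x 1 - u 1 * x 0) ^ 2 := by positivity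
      have h2 : 0 < ‖w‖⁻¹ ^ 3 * (w 0 * x 1 - w 1 * x 0) ^ 2 := by positivity
      linarith
end
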